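/- Let G = (V_s, V_p, E) be a bipartite graph that is not a matching (i.e., some vertex of G has degree at least 2). Then DT(G) ≤ hub(G) − 1, where DT(G) is the distinctness of G and hub(G) is the HUB number of G. -/

import Mathlib

namespace Readability

/-- `x` overlaps `y` by `i`: `1 ≤ i ≤ min |x| |y|` and the length-`i` suffix of `x`
equals the length-`i` prefix of `y`. -/
def OverlapsBy {α : Type*} (x y : List α) (i : ℕ) : Prop :=
  1 ≤ i ∧ i ≤ min x.length y.length ∧ x.drop (x.length - i) = y.take i

/-- `ov x y`: the minimum `i` such that `x` overlaps `y` by `i`, or `0` if none exists. -/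
noncomputable def ov {α : Type*} (x y : List α) : ℕ := sInf {i | OverlapsBy x y i}

/-- An overlap labeling of length `r` of the bipartite graph with parts `Vs`, `Vp` and
edge relation `E ⊆ Vs × Vp`. -/
def IsOverlapLabeling {α Vs Vp : Type*} (E : Vs → Vp → Prop) (r : ℕ)
    (ls : Vs → List α) (lp : Vp → List α) : Prop :=
  (∀ u, (ls u).length = r) ∧ (∀ v, (lp v).length = r) ∧
    ∀ u v, E u v ↔ ∃ i, OverlapsBy (ls u) (lp v) i

/-- Bipartite readability: the least `r` admitting an overlap labeling of length `r`
(over the alphabet `ℕ`). -/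
noncomputable def bReadability {Vs Vp : Type*} (E : Vs → Vp → Prop) : ℕ :=
  sInf {r | ∃ (ls : Vs → List ℕ) (lp : Vp → List ℕ), IsOverlapLabeling E r ls lp}

/-- An injective overlap labeling of length `r` of the digraph with arc relation `A`. -/
def IsInjOverlapLabeling {V : Type*} (A : V → V → Prop) (r : ℕ) (ℓ : V → List ℕ) : Prop :=
  (∀ v, (ℓ v).length = r) ∧ Function.Injective ℓ ∧
    ∀ u v, A u v ↔ 0 < ov (ℓ u) (ℓ v) ∧ ov (ℓ u) (ℓ v) < r

/-- Digraph readability: the least `r` admitting an injective overlap labeling of length `r`. -/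
noncomputable def dReadability {V : Type*} (A : V → V → Prop) : ℕ :=
  sInf {r | ∃ ℓ : V → List ℕ, IsInjOverlapLabeling A r ℓ}

/-- A decomposition of size `k`: a weight function on edges with values in `{1,…,k}`. -/
def IsDecomposition {Vs Vp : Type*} (E : Vs → Vp → Prop) (k : ℕ) (w : Vs → Vp → ℕ) : Prop :=
  ∀ u v, E u v → 1 ≤ w u v ∧ w u v ≤ k

/-- An induced `P₄` with consecutive edges `(s1,p1), (s2,p1), (s2,p2)`. -/
def InducedP4 {Vs Vp : Type*} (E : Vs → Vp → Prop) (s1 s2 : Vs) (p1 p2 : Vp) : Prop :=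
  s1 ≠ s2 ∧ p1 ≠ p2 ∧ E s1 p1 ∧ E s2 p1 ∧ E s2 p2 ∧ ¬ E s1 p2

/-- The `P₄`-rule: on each induced `P₄`, if the middle edge has maximum weight then its weight
is at least the sum of the weights of the two outer edges. -/
def SatisfiesP4Rule {Vs Vp : Type*} (E : Vs → Vp → Prop) (w : Vs → Vp → ℕ) : Prop :=
  ∀ s1 s2 p1 p2, InducedP4 E s1 s2 p1 p2 →
    w s2 p1 = max (w s1 p1) (max (w s2 p1) (w s2 p2)) →
    w s1 p1 + w s2 p2 ≤ w s2 p1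

/-- The strict `P₄`-rule: as the `P₄`-rule, with strict inequality. -/
def SatisfiesStrictP4Rule {Vs Vp : Type*} (E : Vs → Vp → Prop) (w : Vs → Vp → ℕ) : Prop :=
  ∀ s1 s2 p1 p2, InducedP4 E s1 s2 p1 p2 →
    w s2 p1 = max (w s1 p1) (max (w s2 p1) (w s2 p2)) →
    w s1 p1 + w s2 p2 < w s2 p1

/-- `C₄`-freeness of a bipartite graph. -/
def C4Free {Vs Vp : Type*} (E : Vs → Vp → Prop) : Prop :=
  ∀ (s1 s2 : Vs) (p1 p2 : Vp), s1 ≠ s2 → p1 ≠ p2 →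
    ¬ (E s1 p1 ∧ E s1 p2 ∧ E s2 p1 ∧ E s2 p2)

/-- The subgraph `G_i` of a decomposition: edges of weight exactly `i`. -/
def SubAt {Vs Vp : Type*} (E : Vs → Vp → Prop) (w : Vs → Vp → ℕ) (i : ℕ) :
    Vs → Vp → Prop :=
  fun u v => E u v ∧ w u v = i

/-- A bipartite edge relation is a disjoint union of bicliques iff it has no induced `P₄`,
i.e. whenever `(s1,p1), (s2,p1), (s2,p2)` are edges, so is `(s1,p2)`. -/
def BicliqueUnion {Vs Vp : Type*} (H : Vs → Vp → Prop) : Prop :=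
  ∀ s1 s2 p1 p2, H s1 p1 → H s2 p1 → H s2 p2 → H s1 p2

/-- The HUB-rule for a decomposition `w`:
(i) every level graph `G_i` is a disjoint union of bicliques, and
(ii) non-isolated twins in `G_i` (for `i ≥ 2`) are twins in every `G_j` with `1 ≤ j ≤ i-1`
(stated for both parts of the bipartition). -/
def SatisfiesHUBRule {Vs Vp : Type*} (E : Vs → Vp → Prop) (w : Vs → Vp → ℕ) : Prop :=
  (∀ i, 1 ≤ i → BicliqueUnion (SubAt E w i)) ∧
  (∀ i, 2 ≤ i → ∀ u v : Vs, u ≠ v → (∃ p, SubAt E w i u p) →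
      (∀ p, SubAt E w i u p ↔ SubAt E w i v p) →
      ∀ j, 1 ≤ j → j ≤ i - 1 → ∀ p, SubAt E w j u p ↔ SubAt E w j v p) ∧
  (∀ i, 2 ≤ i → ∀ u v : Vp, u ≠ v → (∃ s, SubAt E w i s u) →
      (∀ s, SubAt E w i s u ↔ SubAt E w i s v) →
      ∀ j, 1 ≤ j → j ≤ i - 1 → ∀ s, SubAt E w j s u ↔ SubAt E w j s v)

/-- The HUB number: minimum size of a decomposition satisfying the HUB-rule. -/
noncomputable def hubNumber {Vs Vp : Type*} (E : Vs → Vp → Prop) : ℕ :=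
  sInf {k | ∃ w, IsDecomposition E k w ∧ SatisfiesHUBRule E w}

/-- The underlying undirected simple graph on `Vs ⊕ Vp` of a bipartite graph. -/
def underlyingGraph {Vs Vp : Type*} (E : Vs → Vp → Prop) : SimpleGraph (Vs ⊕ Vp) where
  Adj x y := (∃ u v, x = Sum.inl u ∧ y = Sum.inr v ∧ E u v) ∨
    (∃ u v, x = Sum.inr v ∧ y = Sum.inl u ∧ E u v)
  symm := ⟨by
    rintro x y (⟨u, v, rfl, rfl, h⟩ | ⟨u, v, rfl, rfl, h⟩)
    · exact Or.inr ⟨u, v, rfl, rfl, h⟩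
    · exact Or.inl ⟨u, v, rfl, rfl, h⟩⟩
  loopless := ⟨by
    rintro x (⟨u, v, h1, h2, -⟩ | ⟨u, v, h1, h2, -⟩) <;> subst h1 <;> simp_all⟩

/-- The radius of a graph: the least `r` such that some vertex has eccentricity at most `r`
(for a finite connected graph this is `min_u max_v dist(u,v)`). -/
noncomputable def graphRadius {V : Type*} (G : SimpleGraph V) : ℕ :=
  sInf {r | ∃ u, ∀ v, G.dist u v ≤ r}

/-- Distinctness of two vertices `u, v` of the same part (here the `Vs`-part, with
neighborhoods taken in `Vp`): `max(|N(u)∖N(v)|, |N(v)∖N(u)|)`. -/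
noncomputable def DTpair {Vs Vp : Type*} (E : Vs → Vp → Prop) (u v : Vs) : ℕ :=
  max {p : Vp | E u p ∧ ¬ E v p}.ncard {p : Vp | E v p ∧ ¬ E u p}.ncard

/-- Distinctness of a bipartite graph: the minimum of `DT(u,v)` over pairs of distinct
vertices in the same part. -/
noncomputable def distinctness {Vs Vp : Type*} (E : Vs → Vp → Prop) : ℕ :=
  sInf ({d | ∃ u v : Vs, u ≠ v ∧ d = DTpair E u v} ∪
        {d | ∃ u v : Vp, u ≠ v ∧ d = DTpair (fun p s => E s p) u v})

/-- A bipartite graph fails to be a matching iff some vertex has degree at least 2. -/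
def NotMatching {Vs Vp : Type*} (E : Vs → Vp → Prop) : Prop :=
  (∃ u : Vs, ∃ p1 p2 : Vp, p1 ≠ p2 ∧ E u p1 ∧ E u p2) ∨
  (∃ p : Vp, ∃ u1 u2 : Vs, u1 ≠ u2 ∧ E u1 p ∧ E u2 p)

/-! Take an optimal HUB decomposition `w` of size `k` and let `i` be the largest level at which
`G_i` is not a matching. Above `i` every level is a matching, so a vertex `x` meets each level
`j > i` in at most one edge. If `i ≥ 1`, some vertex has two neighbours `p₁, p₂` in `G_i`; as
`G_i` is a union of bicliques they are non-isolated twins there, hence twins in every `G_j` with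
`j ≤ i` by the HUB-rule, and each of `N(p₁) ∖ N(p₂)`, `N(p₂) ∖ N(p₁)` injects into the levels
`i+1, …, k`. If every level is a matching, a vertex `u` of degree `≥ 2` in `G` has neighbours
`p₁ ≠ p₂`, and `N(p₁) ∖ N(p₂)` injects into the levels other than `w(u, p₁)`. Either way
`DT(p₁, p₂) ≤ k - 1`. -/

section

variable {Vs Vp : Type*} {E : Vs → Vp → Prop} {w : Vs → Vp → ℕ} {k i : ℕ}

lemma notMatching_flip : NotMatching (flip E) ↔ NotMatching E :=
  Or.comm

lemma eq_of_not_notMatching (h : ¬NotMatching E) {s₁ s₂ : Vs} {p : Vp}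
    (h₁ : E s₁ p) (h₂ : E s₂ p) : s₁ = s₂ := by
  by_contra hne
  exact h (Or.inr ⟨p, s₁, s₂, hne, h₁, h₂⟩)

lemma BicliqueUnion.flip (h : BicliqueUnion E) : BicliqueUnion (flip E) :=
  fun p₁ p₂ s₁ s₂ h₁ h₂ h₃ => h s₂ s₁ p₂ p₁ h₃ h₂ h₁

lemma BicliqueUnion.twins_of_common_neighbor (h : BicliqueUnion E) {u : Vs} {p₁ p₂ : Vp}
    (h₁ : E u p₁) (h₂ : E u p₂) (s : Vs) : E s p₁ ↔ E s p₂ :=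
  ⟨fun hs => h s u p₁ p₂ hs h₁ h₂, fun hs => h s u p₂ p₁ hs h₂ h₁⟩

lemma IsDecomposition.flip (hd : IsDecomposition E k w) : IsDecomposition (flip E) k (flip w) :=
  fun p s h => hd s p h

lemma SatisfiesHUBRule.flip (hh : SatisfiesHUBRule E w) : SatisfiesHUBRule (flip E) (flip w) :=
  ⟨fun i hi => (hh.1 i hi).flip, hh.2.2, hh.2.1⟩

lemma IsDecomposition.mem_Icc_of_notMatching (hd : IsDecomposition E k w)
    (h : NotMatching (SubAt E w i)) : i ∈ Set.Icc 1 k := by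
  obtain ⟨u, p, -, -, ⟨hup, rfl⟩, -⟩ | ⟨p, u, -, -, ⟨hup, rfl⟩, -⟩ := h <;> exact hd u p hup

lemma distinctness_flip : distinctness (flip E) = distinctness E := by
  rw [distinctness, distinctness, Set.union_comm]
  rfl

lemma distinctness_le_DTpair_flip {p₁ p₂ : Vp} (hne : p₁ ≠ p₂) :
    distinctness E ≤ DTpair (flip E) p₁ p₂ :=
  Nat.sInf_le (Or.inr ⟨p₁, p₂, hne, rfl⟩)

lemma ncard_sdiff_le_card (T : Finset ℕ) {x y : Vp}
    (hT : ∀ s, E s x → ¬E s y → w s x ∈ T) (hmatch : ∀ j ∈ T, ¬NotMatching (SubAt E w j)) :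
    {s | E s x ∧ ¬E s y}.ncard ≤ T.card := by
  simpa using Set.ncard_le_ncard_of_injOn (t := (T : Set ℕ)) (fun s => w s x)
    (fun s hs => hT s hs.1 hs.2)
    (fun s hs s' hs' hw => eq_of_not_notMatching (hmatch _ (hT s hs.1 hs.2)) ⟨hs.1, rfl⟩
      ⟨hs'.1, hw.symm⟩)

lemma distinctness_le_of_twin_level (hd : IsDecomposition E k w) (hh : SatisfiesHUBRule E w)
    (habove : ∀ j, i < j → ¬NotMatching (SubAt E w j)) {u : Vs} {p₁ p₂ : Vp} (hne : p₁ ≠ p₂)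
    (h₁ : SubAt E w i u p₁) (h₂ : SubAt E w i u p₂) :
    distinctness E ≤ k - i := by
  have hi : 1 ≤ i := h₁.2 ▸ (hd u p₁ h₁.1).1
  have htwin_i := (hh.1 i hi).twins_of_common_neighbor h₁ h₂
  have htwin : ∀ j, 1 ≤ j → j ≤ i → ∀ s, SubAt E w j s p₁ ↔ SubAt E w j s p₂ := by
    intro j hj hji
    rcases hji.eq_or_lt with rfl | hlt
    · exact htwin_i
    · exact hh.2.2 i (by omega) p₁ p₂ hne ⟨u, h₁⟩ htwin_i j hj (by omega)
  have hbound : ∀ {x y : Vp}, (∀ j, 1 ≤ j → j ≤ i → ∀ s, SubAt E w j s x ↔ SubAt E w j s y) →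
      {s | E s x ∧ ¬E s y}.ncard ≤ k - i := by
    intro x y hxy
    have hT : ∀ s, E s x → ¬E s y → w s x ∈ Finset.Ioc i k := by
      intro s hsx hsy
      obtain ⟨hw₁, hwk⟩ := hd s x hsx
      refine Finset.mem_Ioc.2 ⟨not_le.1 fun hwi => hsy ?_, hwk⟩
      exact ((hxy _ hw₁ hwi s).1 ⟨hsx, rfl⟩).1
    simpa using ncard_sdiff_le_card _ hT fun j hj => habove j (Finset.mem_Ioc.1 hj).1
  exact (distinctness_le_DTpair_flip hne).trans
    (max_le (hbound htwin) (hbound fun j hj hji s => (htwin j hj hji s).symm))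

lemma distinctness_le_of_forall_matching (hd : IsDecomposition E k w)
    (hmatch : ∀ j, ¬NotMatching (SubAt E w j)) {u : Vs} {p₁ p₂ : Vp} (hne : p₁ ≠ p₂)
    (h₁ : E u p₁) (h₂ : E u p₂) :
    distinctness E ≤ k - 1 := by
  have hbound : ∀ {x y : Vp}, E u x → E u y → {s | E s x ∧ ¬E s y}.ncard ≤ k - 1 := by
    intro x y hx hy
    have hT : ∀ s, E s x → ¬E s y → w s x ∈ (Finset.Icc 1 k).erase (w u x) := by
      intro s hsx hsy
      refine Finset.mem_erase.2 ⟨fun hw => ?_, Finset.mem_Icc.2 (hd s x hsx)⟩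
      obtain rfl := eq_of_not_notMatching (hmatch _) ⟨hsx, hw⟩ ⟨hx, rfl⟩
      exact hsy hy
    have := ncard_sdiff_le_card _ hT fun j _ => hmatch j
    rwa [Finset.card_erase_of_mem (Finset.mem_Icc.2 (hd u x hx)), Nat.card_Icc,
      Nat.add_sub_cancel] at this
  exact (distinctness_le_DTpair_flip hne).trans (max_le (hbound h₁ h₂) (hbound h₂ h₁))

theorem distinctness_le_of_satisfiesHUBRule (hm : NotMatching E) (hd : IsDecomposition E k w)
    (hh : SatisfiesHUBRule E w) : distinctness E ≤ k - 1 := by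
  classical
  by_cases hlev : ∃ j, NotMatching (SubAt E w j)
  · obtain ⟨j, hj⟩ := hlev
    set i := Nat.findGreatest (fun j => NotMatching (SubAt E w j)) k
    have hi : NotMatching (SubAt E w i) :=
      Nat.findGreatest_spec (P := fun j => NotMatching (SubAt E w j))
        (hd.mem_Icc_of_notMatching hj).2 hj
    have habove : ∀ j, i < j → ¬NotMatching (SubAt E w j) := fun j hij hj =>
      Nat.findGreatest_is_greatest hij (hd.mem_Icc_of_notMatching hj).2 hj
    have hki : k - i ≤ k - 1 := Nat.sub_le_sub_left (hd.mem_Icc_of_notMatching hi).1 k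
    rcases hi with ⟨u, p₁, p₂, hne, h₁, h₂⟩ | ⟨p, s₁, s₂, hne, h₁, h₂⟩
    · exact (distinctness_le_of_twin_level hd hh habove hne h₁ h₂).trans hki
    · rw [← distinctness_flip]
      exact (distinctness_le_of_twin_level hd.flip hh.flip
        (fun j hij h => habove j hij (notMatching_flip.1 h)) hne h₁ h₂).trans hki
  · rw [not_exists] at hlev
    rcases hm with ⟨u, p₁, p₂, hne, h₁, h₂⟩ | ⟨p, s₁, s₂, hne, h₁, h₂⟩
    · exact distinctness_le_of_forall_matching hd hlev hne h₁ h₂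
    · rw [← distinctness_flip]
      exact distinctness_le_of_forall_matching hd.flip
        (fun j h => hlev j (notMatching_flip.1 h)) hne h₁ h₂

end

lemma exists_hub_decomposition {Vs Vp : Type*} [Finite Vs] [Finite Vp] (E : Vs → Vp → Prop) :
    ∃ w, IsDecomposition E (hubNumber E) w ∧ SatisfiesHUBRule E w := by
  let e := Finite.equivFin (Vs × Vp)
  let w : Vs → Vp → ℕ := fun s p => e (s, p) + 1
  -- Every level of `w` has at most one edge, so the HUB-rule holds vacuously.
  have hw : ∀ {s s' p p'}, w s p = w s' p' → s = s' ∧ p = p' := fun h =>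
    Prod.ext_iff.1 (e.injective (Fin.ext (Nat.add_right_cancel h)))
  refine Nat.sInf_mem (s := {k | ∃ w, IsDecomposition E k w ∧ SatisfiesHUBRule E w})
    ⟨Nat.card (Vs × Vp), w, fun s p _ => ⟨Nat.le_add_left 1 _, (e (s, p)).isLt⟩, ?_, ?_, ?_⟩
  · intro j _ s₁ s₂ p₁ p₂ h₁ h₂ h₃
    exact (hw (h₁.2.trans h₂.2.symm)).1 ▸ h₃
  · intro i _ u v huv ⟨p, hp⟩ htwin
    exact absurd (hw (hp.2.trans ((htwin p).1 hp).2.symm)).1 huv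
  · intro i _ u v huv ⟨s, hs⟩ htwin
    exact absurd (hw (hs.2.trans ((htwin s).1 hs).2.symm)).2 huv

/-- If a bipartite graph `G` is not a matching (some vertex has degree ≥ 2),
then `DT(G) ≤ hub(G) − 1`. -/
theorem statement14 {Vs Vp : Type*} [Fintype Vs] [Fintype Vp] (E : Vs → Vp → Prop)
    (hm : NotMatching E) :
    distinctness E ≤ hubNumber E - 1 := by
  obtain ⟨w, hd, hh⟩ := exists_hub_decomposition E
  exact distinctness_le_of_satisfiesHUBRule hm hd hh

end Readability
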